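/- Define χ : ℤ → ℚ by χ(t) = 1 + (t(8+t)(8+2t)/12)·(4/165) + (t/(12·8))·(928/165) + c_{3,1,8}(t) + c_{5,2,8}(t) + c_{11,4,8}(t). Then χ(t) = 0 for every integer t with −8 < t < 0, and χ(1) = 0, χ(2) = 1, χ(3) = 1, χ(4) = 2, χ(5) = 3, χ(6) = 4. (This is Reid's orbifold Riemann–Roch computation of χ(𝒪_X(tA)) for a terminal ℚ-Fano threefold X with −K_X ∼ 8A, A³ = 4/165, c₂c₁ = 928/165 and basket {(3,1),(5,2),(11,4)}; it yields dim|kA| = −1, 0, 0, 1, 2, 3 for k = 1,…,6.) -/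
import Mathlib


/-- Reid's correction term `c(r, b, i)`:
`c(r,b,i) = -i(r²-1)/(12r) + Σ_{j=0}^{i-1} (jb mod r)(r - (jb mod r))/(2r)`. -/
def reidC (r b i : ℕ) : ℚ :=
  -(i : ℚ) * ((r : ℚ) ^ 2 - 1) / (12 * r) +
    ∑ j ∈ Finset.range i, (((j * b) % r : ℕ) : ℚ) * ((r : ℚ) - (((j * b) % r : ℕ) : ℚ)) / (2 * r)

/-- The unique `0 ≤ i < r` with `q · i ≡ -t (mod r)` (valid when `gcd q r = 1`). -/
def reidIdx (r q : ℕ) (t : ℤ) : ℕ :=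
  (((-t : ℤ) : ZMod r) * (q : ZMod r)⁻¹).val

/-- Reid's correction term `c_{r,b,q}(t) = c(r, b, i_{r,b,q}(t))`. -/
def reidCq (r b q : ℕ) (t : ℤ) : ℚ :=
  reidC r b (reidIdx r q t)

instance : Fact (Nat.Prime 5) := ⟨by norm_num⟩
instance : Fact (Nat.Prime 11) := ⟨by norm_num⟩

lemma inv3 : ((8 : ℕ) : ZMod 3)⁻¹ = 2 := by apply inv_eq_of_mul_eq_one_right; decide
lemma inv5 : ((8 : ℕ) : ZMod 5)⁻¹ = 2 := by apply inv_eq_of_mul_eq_one_right; decide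
lemma inv11 : ((8 : ℕ) : ZMod 11)⁻¹ = 7 := by apply inv_eq_of_mul_eq_one_right; decide

theorem stmt_5 (χ : ℤ → ℚ)
    (hχ : ∀ t : ℤ, χ t =
      1 + ((t : ℚ) * (8 + (t : ℚ)) * (8 + 2 * (t : ℚ)) / 12) * (4/165)
        + ((t : ℚ) / (12 * 8)) * (928/165)
        + reidCq 3 1 8 t + reidCq 5 2 8 t + reidCq 11 4 8 t) :
    (∀ t : ℤ, -8 < t → t < 0 → χ t = 0) ∧
      χ 1 = 0 ∧ χ 2 = 1 ∧ χ 3 = 1 ∧ χ 4 = 2 ∧ χ 5 = 3 ∧ χ 6 = 4 := by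
  have cm7 : χ (-7) = 0 := by
    rw [hχ]
    have h3 : reidIdx 3 8 (-7) = 2 := by unfold reidIdx; rw [inv3]; decide
    have h5 : reidIdx 5 8 (-7) = 4 := by unfold reidIdx; rw [inv5]; decide
    have h11 : reidIdx 11 8 (-7) = 5 := by unfold reidIdx; rw [inv11]; decide
    unfold reidCq
    rw [h3, h5, h11]
    norm_num [reidC, Finset.sum_range_succ]
  have cm6 : χ (-6) = 0 := by
    rw [hχ]
    have h3 : reidIdx 3 8 (-6) = 0 := by unfold reidIdx; rw [inv3]; decide
    have h5 : reidIdx 5 8 (-6) = 2 := by unfold reidIdx; rw [inv5]; decide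
    have h11 : reidIdx 11 8 (-6) = 9 := by unfold reidIdx; rw [inv11]; decide
    unfold reidCq
    rw [h3, h5, h11]
    norm_num [reidC, Finset.sum_range_succ]
  have cm5 : χ (-5) = 0 := by
    rw [hχ]
    have h3 : reidIdx 3 8 (-5) = 1 := by unfold reidIdx; rw [inv3]; decide
    have h5 : reidIdx 5 8 (-5) = 0 := by unfold reidIdx; rw [inv5]; decide
    have h11 : reidIdx 11 8 (-5) = 2 := by unfold reidIdx; rw [inv11]; decide
    unfold reidCq
    rw [h3, h5, h11]
    norm_num [reidC, Finset.sum_range_succ]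
  have cm4 : χ (-4) = 0 := by
    rw [hχ]
    have h3 : reidIdx 3 8 (-4) = 2 := by unfold reidIdx; rw [inv3]; decide
    have h5 : reidIdx 5 8 (-4) = 3 := by unfold reidIdx; rw [inv5]; decide
    have h11 : reidIdx 11 8 (-4) = 6 := by unfold reidIdx; rw [inv11]; decide
    unfold reidCq
    rw [h3, h5, h11]
    norm_num [reidC, Finset.sum_range_succ]
  have cm3 : χ (-3) = 0 := by
    rw [hχ]
    have h3 : reidIdx 3 8 (-3) = 0 := by unfold reidIdx; rw [inv3]; decide
    have h5 : reidIdx 5 8 (-3) = 1 := by unfold reidIdx; rw [inv5]; decide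
    have h11 : reidIdx 11 8 (-3) = 10 := by unfold reidIdx; rw [inv11]; decide
    unfold reidCq
    rw [h3, h5, h11]
    norm_num [reidC, Finset.sum_range_succ]
  have cm2 : χ (-2) = 0 := by
    rw [hχ]
    have h3 : reidIdx 3 8 (-2) = 1 := by unfold reidIdx; rw [inv3]; decide
    have h5 : reidIdx 5 8 (-2) = 4 := by unfold reidIdx; rw [inv5]; decide
    have h11 : reidIdx 11 8 (-2) = 3 := by unfold reidIdx; rw [inv11]; decide
    unfold reidCq
    rw [h3, h5, h11]
    norm_num [reidC, Finset.sum_range_succ]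
  have cm1 : χ (-1) = 0 := by
    rw [hχ]
    have h3 : reidIdx 3 8 (-1) = 2 := by unfold reidIdx; rw [inv3]; decide
    have h5 : reidIdx 5 8 (-1) = 2 := by unfold reidIdx; rw [inv5]; decide
    have h11 : reidIdx 11 8 (-1) = 7 := by unfold reidIdx; rw [inv11]; decide
    unfold reidCq
    rw [h3, h5, h11]
    norm_num [reidC, Finset.sum_range_succ]
  have cp1 : χ 1 = 0 := by
    rw [hχ]
    have h3 : reidIdx 3 8 1 = 1 := by unfold reidIdx; rw [inv3]; decide
    have h5 : reidIdx 5 8 1 = 3 := by unfold reidIdx; rw [inv5]; decide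
    have h11 : reidIdx 11 8 1 = 4 := by unfold reidIdx; rw [inv11]; decide
    unfold reidCq
    rw [h3, h5, h11]
    norm_num [reidC, Finset.sum_range_succ]
  have cp2 : χ 2 = 1 := by
    rw [hχ]
    have h3 : reidIdx 3 8 2 = 2 := by unfold reidIdx; rw [inv3]; decide
    have h5 : reidIdx 5 8 2 = 1 := by unfold reidIdx; rw [inv5]; decide
    have h11 : reidIdx 11 8 2 = 8 := by unfold reidIdx; rw [inv11]; decide
    unfold reidCq
    rw [h3, h5, h11]
    norm_num [reidC, Finset.sum_range_succ]
  have cp3 : χ 3 = 1 := by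
    rw [hχ]
    have h3 : reidIdx 3 8 3 = 0 := by unfold reidIdx; rw [inv3]; decide
    have h5 : reidIdx 5 8 3 = 4 := by unfold reidIdx; rw [inv5]; decide
    have h11 : reidIdx 11 8 3 = 1 := by unfold reidIdx; rw [inv11]; decide
    unfold reidCq
    rw [h3, h5, h11]
    norm_num [reidC, Finset.sum_range_succ]
  have cp4 : χ 4 = 2 := by
    rw [hχ]
    have h3 : reidIdx 3 8 4 = 1 := by unfold reidIdx; rw [inv3]; decide
    have h5 : reidIdx 5 8 4 = 2 := by unfold reidIdx; rw [inv5]; decide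
    have h11 : reidIdx 11 8 4 = 5 := by unfold reidIdx; rw [inv11]; decide
    unfold reidCq
    rw [h3, h5, h11]
    norm_num [reidC, Finset.sum_range_succ]
  have cp5 : χ 5 = 3 := by
    rw [hχ]
    have h3 : reidIdx 3 8 5 = 2 := by unfold reidIdx; rw [inv3]; decide
    have h5 : reidIdx 5 8 5 = 0 := by unfold reidIdx; rw [inv5]; decide
    have h11 : reidIdx 11 8 5 = 9 := by unfold reidIdx; rw [inv11]; decide
    unfold reidCq
    rw [h3, h5, h11]
    norm_num [reidC, Finset.sum_range_succ]
  have cp6 : χ 6 = 4 := by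
    rw [hχ]
    have h3 : reidIdx 3 8 6 = 0 := by unfold reidIdx; rw [inv3]; decide
    have h5 : reidIdx 5 8 6 = 3 := by unfold reidIdx; rw [inv5]; decide
    have h11 : reidIdx 11 8 6 = 2 := by unfold reidIdx; rw [inv11]; decide
    unfold reidCq
    rw [h3, h5, h11]
    norm_num [reidC, Finset.sum_range_succ]
  refine ⟨?_, cp1, cp2, cp3, cp4, cp5, cp6⟩
  intro t h1 h2
  interval_cases t <;> assumption
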